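/- Let H be a Hilbert algebra, G an implicative semilattice, and f : H → G a map with f(1) = 1 and f(a→b) = f(a)→f(b) for all a,b ∈ H. Then there exists a unique map h : FC(H) → G such that h(X(H)) = 1, h(U ∩ V) = h(U) ∧ h(V) for all U,V ∈ FC(H), and h(φ(a)) = f(a) for all a ∈ H. -/

import Mathlib

/-- A Hilbert algebra `(H, →, 1)`. -/
structure HilbertAlgebra (H : Type*) where
  imp : H → H → H
  one : H
  ax1 : ∀ a b : H, imp a (imp b a) = one
  ax2 : ∀ a b c : H, imp (imp a (imp b c)) (imp (imp a b) (imp a c)) = one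
  ax3 : ∀ a b : H, imp a b = one → imp b a = one → a = b

namespace HilbertAlgebra

variable {H : Type*} (hH : HilbertAlgebra H)

/-- The natural order: `a ≤ b` iff `a → b = 1`. -/
def le (a b : H) : Prop := hH.imp a b = hH.one

/-- Implicative filter. -/
def IsImplicativeFilter (F : Set H) : Prop :=
  hH.one ∈ F ∧ ∀ a b : H, a ∈ F → hH.imp a b ∈ F → b ∈ F

/-- Irreducible implicative filter. -/
def IsIrreducible (F : Set H) : Prop :=
  hH.IsImplicativeFilter F ∧ F ≠ Set.univ ∧
    ∀ F₁ F₂ : Set H, hH.IsImplicativeFilter F₁ → hH.IsImplicativeFilter F₂ →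
      F = F₁ ∩ F₂ → (F = F₁ ∨ F = F₂)

/-- Order-ideal: nonempty, downward closed, up-directed (w.r.t. the natural order). -/
def IsOrderIdeal (I : Set H) : Prop :=
  I.Nonempty ∧ (∀ a b : H, b ∈ I → hH.le a b → a ∈ I) ∧
    ∀ a b : H, a ∈ I → b ∈ I → ∃ c ∈ I, hH.le a c ∧ hH.le b c

/-- `φ(a) = {P ∈ X(H) : a ∈ P}`. -/
def phi (a : H) : Set (Set H) := {P | hH.IsIrreducible P ∧ a ∈ P}

/-- An upset of `X(H)` (the poset of irreducible implicative filters, ordered by `⊆`). -/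
def IsUpsetX (U : Set (Set H)) : Prop :=
  (∀ P ∈ U, hH.IsIrreducible P) ∧
    ∀ P Q : Set H, P ∈ U → hH.IsIrreducible Q → P ⊆ Q → Q ∈ U

/-- The Heyting implication `U ⇒ V` on upsets of `X(H)`. -/
def impUps (U V : Set (Set H)) : Set (Set H) :=
  {P | hH.IsIrreducible P ∧ ∀ Q : Set H, hH.IsIrreducible Q → P ⊆ Q → Q ∈ U → Q ∈ V}

/-- `FC(H)`: finite nonempty intersections of sets of the form `φ(a)`. -/
def FC : Set (Set (Set H)) :=
  {U | ∃ l : List H, l ≠ [] ∧ U = ⋂ a ∈ l, hH.phi a}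

/-- `X*(H)`: implicative filters that are intersections of finitely many (at least one)
irreducible implicative filters. -/
def XStar : Set (Set H) :=
  {F | ∃ S : Set (Set H), S.Finite ∧ S.Nonempty ∧ (∀ P ∈ S, hH.IsIrreducible P) ∧ F = ⋂₀ S}

/-- `Φ(a) = {F ∈ X*(H) : a ∈ F}`. -/
def Phi (a : H) : Set (Set H) := {F | F ∈ hH.XStar ∧ a ∈ F}

/-- An upset of `X*(H)` (ordered by `⊆`). -/
def IsUpsetXStar (U : Set (Set H)) : Prop :=
  (∀ F ∈ U, F ∈ hH.XStar) ∧
    ∀ F K : Set H, F ∈ U → K ∈ hH.XStar → F ⊆ K → K ∈ U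

/-- The implication `U ⇒ V` on upsets of `X*(H)`. -/
def impUpsStar (U V : Set (Set H)) : Set (Set H) :=
  {F | F ∈ hH.XStar ∧ ∀ K : Set H, K ∈ hH.XStar → F ⊆ K → K ∈ U → K ∈ V}

/-- Homomorphism of Hilbert algebras. -/
def IsHom {G : Type*} (hG : HilbertAlgebra G) (f : H → G) : Prop :=
  f hH.one = hG.one ∧ ∀ a b : H, f (hH.imp a b) = hG.imp (f a) (f b)

end HilbertAlgebra

/-- A Hilbert algebra with supremum: `(H, ∨)` is a join-semilattice whose induced
order has greatest element `1`, and `a → b = 1` iff `a ∨ b = b`. -/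
structure HilbertSup (H : Type*) extends HilbertAlgebra H where
  sup : H → H → H
  sup_comm : ∀ a b : H, sup a b = sup b a
  sup_assoc : ∀ a b c : H, sup (sup a b) c = sup a (sup b c)
  sup_idem : ∀ a : H, sup a a = a
  sup_one : ∀ a : H, sup a one = one
  imp_eq_one_iff : ∀ a b : H, imp a b = one ↔ sup a b = b

/-- Morphism of Hilbert algebras with supremum. -/
def HilbertSup.IsHomSup {H G : Type*} (hH : HilbertSup H) (hG : HilbertSup G)
    (f : H → G) : Prop :=
  hH.toHilbertAlgebra.IsHom hG.toHilbertAlgebra f ∧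
    ∀ a b : H, f (hH.sup a b) = hG.sup (f a) (f b)

/-- An implicative semilattice: a meet-semilattice with greatest element and a binary
operation `him` such that `a ⊓ b ≤ c ↔ a ≤ him b c`. -/
class ImplicativeSemilattice (G : Type*) extends SemilatticeInf G, OrderTop G where
  him : G → G → G
  inf_le_iff_le_him : ∀ a b c : G, a ⊓ b ≤ c ↔ a ≤ him b c


/-! The filter generated by `a₁, …, aₙ` consists of the `b` with `a₁ → (⋯ → (aₙ → b)) = 1`,
and by Zorn's lemma every `b` outside an implicative filter is separated from it by an
irreducible filter. Hence `φ(a₁) ∩ ⋯ ∩ φ(aₙ) ⊆ φ(b)` forces `a₁ → (⋯ → (aₙ → b)) = 1`, so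
`f(a₁) ⊓ ⋯ ⊓ f(aₙ) ≤ f(b)` because `f` turns `→` into the relative pseudocomplement. Thus
`f(a₁) ⊓ ⋯ ⊓ f(aₙ)` depends only on `φ(a₁) ∩ ⋯ ∩ φ(aₙ)`, which defines `h`; uniqueness is
forced by the meet and `φ` conditions. -/

namespace HilbertAlgebra

variable {H : Type*} (hH : HilbertAlgebra H)

theorem eq_one_of_one_imp {b : H} (h : hH.imp hH.one b = hH.one) : b = hH.one := by
  have hb : hH.imp b hH.one = hH.one := by simpa only [h] using hH.ax1 b hH.one
  exact hH.ax3 _ _ hb h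

theorem imp_self (a : H) : hH.imp a a = hH.one := by
  have h := hH.ax2 a (hH.imp a a) a
  rw [hH.ax1 a (hH.imp a a)] at h
  have h' := hH.eq_one_of_one_imp h
  rw [hH.ax1 a a] at h'
  exact hH.eq_one_of_one_imp h'

theorem imp_one (a : H) : hH.imp a hH.one = hH.one :=
  hH.eq_one_of_one_imp (hH.ax1 hH.one a)

theorem imp_imp_imp_of_imp {b c : H} (h : hH.imp b c = hH.one) (a : H) :
    hH.imp (hH.imp a b) (hH.imp a c) = hH.one := by
  have h' := hH.ax2 a b c
  rw [h, hH.imp_one] at h'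
  exact hH.eq_one_of_one_imp h'

theorem imp_trans {a b c : H} (hab : hH.imp a b = hH.one) (hbc : hH.imp b c = hH.one) :
    hH.imp a c = hH.one := by
  have h := hH.imp_imp_imp_of_imp hbc a
  rw [hab] at h
  exact hH.eq_one_of_one_imp h

def chain (l : List H) (b : H) : H := l.foldr hH.imp b

@[simp] theorem chain_cons (a : H) (l : List H) (b : H) :
    hH.chain (a :: l) b = hH.imp a (hH.chain l b) := rfl

theorem chain_one (l : List H) : hH.chain l hH.one = hH.one := by
  induction l with
  | nil => rfl
  | cons a l ih => rw [chain_cons, ih, hH.imp_one]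

theorem chain_imp_imp_chain (l : List H) (a b : H) :
    hH.imp (hH.chain l (hH.imp a b)) (hH.imp (hH.chain l a) (hH.chain l b)) = hH.one := by
  induction l with
  | nil => exact hH.imp_self _
  | cons x l ih => exact hH.imp_trans (hH.imp_imp_imp_of_imp ih x) (hH.ax2 _ _ _)

theorem chain_eq_one_of_imp {l : List H} {a b : H} (hab : hH.chain l (hH.imp a b) = hH.one)
    (ha : hH.chain l a = hH.one) : hH.chain l b = hH.one := by
  have h := hH.chain_imp_imp_chain l a b
  rw [hab] at h
  have h' := hH.eq_one_of_one_imp h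
  rw [ha] at h'
  exact hH.eq_one_of_one_imp h'

theorem imp_chain (l : List H) (b : H) : hH.imp b (hH.chain l b) = hH.one := by
  induction l with
  | nil => exact hH.imp_self b
  | cons a l ih => exact hH.imp_trans ih (hH.ax1 _ a)

theorem chain_of_mem {l : List H} {a : H} (h : a ∈ l) : hH.chain l a = hH.one := by
  induction l with
  | nil => simp at h
  | cons x l ih =>
    rcases List.mem_cons.mp h with rfl | h
    · exact hH.imp_chain l a
    · rw [chain_cons, ih h, hH.imp_one]

def gen (l : List H) : Set H := {b | hH.chain l b = hH.one}

theorem isImplicativeFilter_gen (l : List H) : hH.IsImplicativeFilter (hH.gen l) :=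
  ⟨hH.chain_one l, fun _ _ ha hab => hH.chain_eq_one_of_imp hab ha⟩

theorem mem_gen_of_mem {l : List H} {a : H} (h : a ∈ l) : a ∈ hH.gen l := hH.chain_of_mem h

theorem isImplicativeFilter_sUnion {c : Set (Set H)} (hc : ∀ F ∈ c, hH.IsImplicativeFilter F)
    (hchain : IsChain (· ⊆ ·) c) (hne : c.Nonempty) : hH.IsImplicativeFilter (⋃₀ c) := by
  obtain ⟨F, hF⟩ := hne
  refine ⟨⟨F, hF, (hc F hF).1⟩, ?_⟩
  rintro a b ⟨F₁, hF₁, ha⟩ ⟨F₂, hF₂, hab⟩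
  rcases hchain.total hF₁ hF₂ with h | h
  · exact ⟨F₂, hF₂, (hc F₂ hF₂).2 a b (h ha) hab⟩
  · exact ⟨F₁, hF₁, (hc F₁ hF₁).2 a b ha (h hab)⟩

theorem isIrreducible_of_maximal {b : H} {P : Set H}
    (hP : Maximal (fun F => hH.IsImplicativeFilter F ∧ b ∉ F) P) : hH.IsIrreducible P := by
  refine ⟨hP.1.1, fun h => hP.1.2 (h ▸ Set.mem_univ b), fun F₁ F₂ hF₁ hF₂ hP₁₂ => ?_⟩
  by_contra! hne
  have hb : ∀ F, hH.IsImplicativeFilter F → P ⊆ F → P ≠ F → b ∈ F := fun F hF hPF hPne => by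
    by_contra hbF
    exact hPne (hPF.antisymm (hP.2 ⟨hF, hbF⟩ hPF))
  exact hP.1.2 (hP₁₂ ▸ ⟨hb F₁ hF₁ (hP₁₂ ▸ Set.inter_subset_left) hne.1,
    hb F₂ hF₂ (hP₁₂ ▸ Set.inter_subset_right) hne.2⟩)

theorem exists_isIrreducible_of_notMem {F : Set H} (hF : hH.IsImplicativeFilter F) {b : H}
    (hb : b ∉ F) : ∃ P, hH.IsIrreducible P ∧ F ⊆ P ∧ b ∉ P := by
  obtain ⟨P, hFP, hP⟩ := zorn_subset_nonempty {F | hH.IsImplicativeFilter F ∧ b ∉ F}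
    (fun c hc hchain hne => ⟨⋃₀ c,
      ⟨hH.isImplicativeFilter_sUnion (fun F hF => (hc hF).1) hchain hne,
        fun ⟨F, hF, hbF⟩ => (hc hF).2 hbF⟩,
      fun _ => Set.subset_sUnion_of_mem⟩) F ⟨hF, hb⟩
  exact ⟨P, hH.isIrreducible_of_maximal hP, hFP, hP.1.2⟩

theorem mem_biInter_phi {l : List H} {P : Set H} :
    P ∈ ⋂ a ∈ l, hH.phi a ↔ ∀ a ∈ l, hH.IsIrreducible P ∧ a ∈ P := by
  simp [phi]

theorem mem_gen_of_biInter_phi_subset {l : List H} {b : H}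
    (h : ⋂ a ∈ l, hH.phi a ⊆ hH.phi b) : b ∈ hH.gen l := by
  by_contra hb
  obtain ⟨P, hP, hlP, hbP⟩ := hH.exists_isIrreducible_of_notMem (hH.isImplicativeFilter_gen l) hb
  exact hbP (h (hH.mem_biInter_phi.mpr fun a ha => ⟨hP, hlP (hH.mem_gen_of_mem ha)⟩)).2

theorem biInter_phi_cons (a : H) (l : List H) :
    ⋂ b ∈ a :: l, hH.phi b = hH.phi a ∩ ⋂ b ∈ l, hH.phi b := by
  simp only [List.mem_cons, Set.iInter_iInter_eq_or_left]

theorem biInter_phi_append (l₁ l₂ : List H) :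
    ⋂ a ∈ l₁ ++ l₂, hH.phi a = (⋂ a ∈ l₁, hH.phi a) ∩ ⋂ a ∈ l₂, hH.phi a := by
  simp only [List.mem_append, Set.iInter_or, Set.iInter_inter_distrib]

theorem biInter_phi_singleton (a : H) : ⋂ b ∈ [a], hH.phi b = hH.phi a := by
  simp

theorem phi_one : hH.phi hH.one = {P | hH.IsIrreducible P} :=
  Set.ext fun _ => and_iff_left_of_imp fun hP => hP.1.1

end HilbertAlgebra

namespace ImplicativeSemilattice

variable {G : Type*} [ImplicativeSemilattice G]

theorem inf_him_le (b c : G) : b ⊓ him b c ≤ c := by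
  rw [inf_comm]
  exact (inf_le_iff_le_him _ _ _).mpr le_rfl

end ImplicativeSemilattice

section ListInf

variable {H G : Type*}

def listInf [SemilatticeInf G] [OrderTop G] (f : H → G) (l : List H) : G :=
  l.foldr (fun a g => f a ⊓ g) ⊤

section Lattice

variable [SemilatticeInf G] [OrderTop G] (f : H → G)

@[simp] theorem listInf_nil : listInf f ([] : List H) = ⊤ := rfl

@[simp] theorem listInf_cons (a : H) (l : List H) : listInf f (a :: l) = f a ⊓ listInf f l :=
  rfl

theorem listInf_append (l₁ l₂ : List H) :
    listInf f (l₁ ++ l₂) = listInf f l₁ ⊓ listInf f l₂ := by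
  induction l₁ with
  | nil => simp
  | cons a l ih => simp [ih, inf_assoc]

theorem le_listInf {l : List H} {g : G} (h : ∀ a ∈ l, g ≤ f a) : g ≤ listInf f l := by
  induction l with
  | nil => exact le_top
  | cons a l ih => exact le_inf (h a List.mem_cons_self) (ih fun b hb => h b (.tail a hb))

end Lattice

open HilbertAlgebra ImplicativeSemilattice

variable [ImplicativeSemilattice G] (hH : HilbertAlgebra H) {f : H → G}

theorem listInf_inf_chain_le (hfimp : ∀ a b, f (hH.imp a b) = him (f a) (f b)) (l : List H)
    (b : H) : listInf f l ⊓ f (hH.chain l b) ≤ f b := by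
  induction l with
  | nil => exact inf_le_right
  | cons a l ih =>
    calc listInf f (a :: l) ⊓ f (hH.chain (a :: l) b)
        = listInf f l ⊓ (f a ⊓ him (f a) (f (hH.chain l b))) := by
          rw [listInf_cons, chain_cons, hfimp, inf_assoc, inf_left_comm]
      _ ≤ listInf f l ⊓ f (hH.chain l b) := inf_le_inf_left _ (inf_him_le _ _)
      _ ≤ f b := ih

theorem listInf_le_of_mem_gen (hf1 : f hH.one = ⊤)
    (hfimp : ∀ a b, f (hH.imp a b) = him (f a) (f b)) {l : List H} {b : H}
    (hb : b ∈ hH.gen l) : listInf f l ≤ f b := by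
  simpa [show hH.chain l b = hH.one from hb, hf1] using listInf_inf_chain_le hH hfimp l b

theorem listInf_eq_of_biInter_phi_eq (hf1 : f hH.one = ⊤)
    (hfimp : ∀ a b, f (hH.imp a b) = him (f a) (f b)) {l₁ l₂ : List H}
    (h : ⋂ a ∈ l₁, hH.phi a = ⋂ a ∈ l₂, hH.phi a) : listInf f l₁ = listInf f l₂ := by
  have hle : ∀ {l₁ l₂ : List H}, ⋂ a ∈ l₁, hH.phi a ⊆ ⋂ a ∈ l₂, hH.phi a →
      listInf f l₁ ≤ listInf f l₂ := fun h => le_listInf f fun b hb =>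
    listInf_le_of_mem_gen hH hf1 hfimp <| hH.mem_gen_of_biInter_phi_subset <|
      h.trans (Set.biInter_subset_of_mem hb)
  exact le_antisymm (hle h.le) (hle h.ge)

end ListInf

theorem eq_listInf_of_inter_of_phi {H G : Type*} {hH : HilbertAlgebra H} [SemilatticeInf G]
    [OrderTop G] {f : H → G} (h : hH.FC → G)
    (hinter : ∀ U V W : hH.FC,
      (W : Set (Set H)) = (U : Set (Set H)) ∩ (V : Set (Set H)) → h W = h U ⊓ h V)
    (hphi : ∀ (a : H) (U : hH.FC), (U : Set (Set H)) = hH.phi a → h U = f a)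
    (a : H) (l : List H) (U : hH.FC) (hU : (U : Set (Set H)) = ⋂ b ∈ a :: l, hH.phi b) :
    h U = listInf f (a :: l) := by
  induction l generalizing a U with
  | nil => simpa using hphi a U (hU.trans (hH.biInter_phi_singleton a))
  | cons b l ih =>
    rw [hH.biInter_phi_cons] at hU
    rw [hinter ⟨_, [a], List.cons_ne_nil _ _, (hH.biInter_phi_singleton a).symm⟩
        ⟨_, b :: l, List.cons_ne_nil _ _, rfl⟩ U hU,
      hphi a _ rfl, ih b _ rfl, listInf_cons f a (b :: l)]

theorem stmt_9 {H G : Type*} (hH : HilbertAlgebra H) [ImplicativeSemilattice G]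
    (f : H → G) (hf1 : f hH.one = (⊤ : G))
    (hfimp : ∀ a b : H, f (hH.imp a b) = ImplicativeSemilattice.him (f a) (f b)) :
    ∃! h : hH.FC → G,
      (∀ U : hH.FC, (U : Set (Set H)) = {P : Set H | hH.IsIrreducible P} → h U = ⊤) ∧
      (∀ U V W : hH.FC,
        (W : Set (Set H)) = (U : Set (Set H)) ∩ (V : Set (Set H)) → h W = h U ⊓ h V) ∧
      (∀ (a : H) (U : hH.FC), (U : Set (Set H)) = hH.phi a → h U = f a) := by
  choose rep _ hrep using fun U : hH.FC => U.2
  have hwd : ∀ (U : hH.FC) (l : List H), (U : Set (Set H)) = ⋂ a ∈ l, hH.phi a →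
      listInf f (rep U) = listInf f l := fun U l hU =>
    listInf_eq_of_biInter_phi_eq hH hf1 hfimp ((hrep U).symm.trans hU)
  refine ⟨fun U => listInf f (rep U), ⟨fun U hU => ?_, fun U V W hW => ?_, fun a U hU => ?_⟩,
    fun h ⟨_, hinter, hphi⟩ => funext fun U => ?_⟩
  · exact (hwd U [hH.one] (by rw [hU, hH.biInter_phi_singleton, hH.phi_one])).trans
      (by simp [hf1])
  · exact (hwd W (rep U ++ rep V) (by rw [hW, hH.biInter_phi_append, ← hrep, ← hrep])).trans
      (listInf_append f _ _)
  · exact (hwd U [a] (by rw [hU, hH.biInter_phi_singleton])).trans (by simp)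
  · obtain ⟨l, hl, hU⟩ := U.2
    obtain ⟨a, l, rfl⟩ := List.exists_cons_of_ne_nil hl
    rw [eq_listInf_of_inter_of_phi h hinter hphi a l U hU, hwd U _ hU]
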